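/- Let ν = (n₁,…,n_k) be a tuple of positive integers, let ℓ be an integer with ℓ ≥ (1/2)·max{n₁+1,…,n_k+1,k}, and let m ≥ 1 be an integer. Then there exist real (2m+1)×(2m+1) matrices P₁, …, P_{2ℓk} such that for all i ≠ j the sign of det(P_i − P_j), taken in {−1, 0, 1}, equals the entry (B_{ν,ℓ})_{ij}. -/

import Mathlib

open Matrix

/-- Entry of the antisymmetric matrix `S_N` whose entries above the diagonal are all `1`
(indices are 0-based naturals). -/
def SmatE (p q : ℕ) : ℤ := if p < q then 1 else if q < p then -1 else 0

/-- The vector `v_{n,ℓ} ∈ ℤ^{2ℓ-1}` (0-based index `p`). -/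
def vvecE (n ℓ p : ℕ) : ℤ :=
  if p < n then (-1) ^ p
  else if p = 2 * ℓ - 2 ∧ Even n then 0
  else 1

/-- Entry of the 2ℓ×2ℓ block matrix `A_{n,ℓ} = [[S_{2ℓ-1}, v_{n,ℓ}], [-v_{n,ℓ}ᵀ, 0]]`
(0-based indices). -/
def AmatE (n ℓ p q : ℕ) : ℤ :=
  if p < 2 * ℓ - 1 then
    (if q < 2 * ℓ - 1 then SmatE p q else vvecE n ℓ p)
  else
    (if q < 2 * ℓ - 1 then -(vvecE n ℓ q) else 0)

/-- The antisymmetric 2ℓ×2ℓ integer matrix `A_{n,ℓ}`. -/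
def Amat (n ℓ : ℕ) : Matrix (Fin (2 * ℓ)) (Fin (2 * ℓ)) ℤ :=
  Matrix.of fun i j => AmatE n ℓ (i : ℕ) (j : ℕ)

/-- The antisymmetric `2ℓk × 2ℓk` matrix `B_{ν,ℓ}` for `ν = (ν 0, …, ν (k-1))`, defined
inductively: `B` for `k = 1` is `A_{ν 0, ℓ}`, and `B` for `k+1` is the block matrix
`[[B_k, C],[-Cᵀ, A_{ν k, ℓ}]]` where each column of `C` equals the `k`-th column
(1-based; 0-based index `k-1`) of `B_k`. -/
def Bmat (ℓ : ℕ) (ν : ℕ → ℕ) : (k : ℕ) → Matrix (Fin (2 * ℓ * k)) (Fin (2 * ℓ * k)) ℤ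
  | 0 => 0
  | k + 1 =>
    let B := Bmat ℓ ν k
    let C : Matrix (Fin (2 * ℓ * k)) (Fin (2 * ℓ)) ℤ :=
      Matrix.of fun i _ => if h : k - 1 < 2 * ℓ * k then B i ⟨k - 1, h⟩ else 0
    Matrix.reindex (finSumFinEquiv.trans (finCongr (by ring)))
      (finSumFinEquiv.trans (finCongr (by ring)))
      (Matrix.fromBlocks B C (-Cᵀ) (Amat (ν k) ℓ))

/-!
The first diagonal block `A_{ν 0,ℓ}` is realised by diagonal matrices `diag x_p` with integer
points `x_p ∈ ℤ³` for which the sign of `∏ᵢ (x_p - x_q)ᵢ` is `(A_{ν 0,ℓ})_{pq}`. The rows and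
columns of a later block `b` agree, off their diagonal block, with the row and column `b - 1` of
the first block. So the points of block `b` are `diag x_{b-1} + M_ε(y_r)`, where the `y_r` realise
`A_{ν b,ℓ}` and `M_ε(y)` has diagonal `ε y`: inside the cluster the determinants are
`ε³ ∏ (y_r - y_s)`, all determinants between points with different anchors tend to the nonzero
`∏ (x_a - x_{a'})` as `ε → 0`, and the off-diagonal part of `M_ε` makes the remaining pairs exactly
singular. A small `ε` then works for all pairs at once, and a block `i • 1` of even size raises the
dimension from `3` to `2m + 1` without changing any sign.
-/

open Filter Topology

lemma AmatE_self (n ℓ p : ℕ) : AmatE n ℓ p p = 0 := by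
  unfold AmatE SmatE; split_ifs <;> omega

lemma AmatE_antisymm (n ℓ p q : ℕ) : AmatE n ℓ q p = -AmatE n ℓ p q := by
  unfold AmatE SmatE; split_ifs <;> omega

lemma AmatE_ne_zero {n ℓ p q : ℕ} (hp : p < 2 * ℓ - 1) (hq : q < 2 * ℓ - 1) (hpq : p ≠ q) :
    AmatE n ℓ p q ≠ 0 := by
  unfold AmatE SmatE; split_ifs <;> omega

lemma vvecE_eq_neg_one_or_zero_or_one (n ℓ p : ℕ) :
    vvecE n ℓ p = -1 ∨ vvecE n ℓ p = 0 ∨ vvecE n ℓ p = 1 := by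
  unfold vvecE
  split_ifs
  · rcases neg_one_pow_eq_or ℤ p with h | h <;> simp [h]
  · simp
  · simp

lemma eq_of_vvecE_eq_zero {n ℓ p : ℕ} (h : vvecE n ℓ p = 0) : p = 2 * ℓ - 2 := by
  unfold vvecE at h
  split_ifs at h with h₁ h₂
  · exact absurd h (pow_ne_zero _ (by norm_num))
  · exact h₂.1
  · exact absurd h one_ne_zero

lemma prod_sub_swap_fin_three {R : Type*} [CommRing R] (x y : Fin 3 → R) :
    ∏ i, (y i - x i) = -∏ i, (x i - y i) := by
  simp only [Fin.prod_univ_three]; ring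

lemma eventually_sign_eq_of_continuousAt {X α : Type*} [TopologicalSpace X] [Zero α]
    [LinearOrder α] [TopologicalSpace α] [OrderTopology α] {f : X → α} {x : X}
    (hf : ContinuousAt f x) (hx : f x ≠ 0) :
    ∀ᶠ y in 𝓝 x, SignType.sign (f y) = SignType.sign (f x) :=
  tendsto_pure.1 (by rw [← nhds_discrete]; exact (continuousAt_sign_of_ne_zero hx).comp hf)

lemma sign_det_fromBlocks_smul_one_sub {n p : Type*} [Fintype n] [DecidableEq n] [Fintype p]
    [DecidableEq p] (hp : Even (Fintype.card p)) (A B : Matrix n n ℝ) {x y : ℝ} (hxy : x ≠ y) :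
    SignType.sign (fromBlocks A 0 0 (x • (1 : Matrix p p ℝ)) - fromBlocks B 0 0 (y • 1)).det =
      SignType.sign (A - B).det := by
  have hsub : fromBlocks A 0 0 (x • (1 : Matrix p p ℝ)) - fromBlocks B 0 0 (y • 1) =
      fromBlocks (A - B) 0 0 ((x - y) • 1) := by
    ext (i | i) (j | j) <;> simp [sub_smul]
  rw [hsub, det_fromBlocks_zero₂₁, det_smul, det_one, mul_one, sign_mul,
    sign_pos (hp.pow_pos (sub_ne_zero.2 hxy)), mul_one]

namespace Amat

/-- Heights of the chain points `p < 2ℓ - 1`; they lie below, at, or above the height `2ℓ + 1`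
of the apex `2ℓ - 1` according to the sign of `(v_{n,ℓ})_p`. -/
def chainHeight (n ℓ p : ℕ) : ℤ :=
  if vvecE n ℓ p = -1 then p + 1 else if vvecE n ℓ p = 0 then 2 * ℓ + 1 else 2 * ℓ + 3 + p

lemma one_le_chainHeight (n ℓ p : ℕ) : 1 ≤ chainHeight n ℓ p := by
  unfold chainHeight; split_ifs <;> omega

lemma chainHeight_of_vvecE_eq_zero {n ℓ p : ℕ} (h : vvecE n ℓ p = 0) :
    chainHeight n ℓ p = 2 * ℓ + 1 := by
  rw [chainHeight, if_neg (by rw [h]; decide), if_pos h]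

lemma chainHeight_ne {n ℓ p q : ℕ} (hp : p < 2 * ℓ - 1) (hq : q < 2 * ℓ - 1) (hpq : p ≠ q) :
    chainHeight n ℓ p ≠ chainHeight n ℓ q := by
  have hp₀ := @eq_of_vvecE_eq_zero n ℓ p
  have hq₀ := @eq_of_vvecE_eq_zero n ℓ q
  unfold chainHeight
  split_ifs <;> omega

lemma sign_chainHeight_sub {n ℓ p : ℕ} (hp : p < 2 * ℓ - 1) :
    (SignType.sign (chainHeight n ℓ p - (2 * ℓ + 1)) : ℤ) = vvecE n ℓ p := by
  rcases vvecE_eq_neg_one_or_zero_or_one n ℓ p with h | h | h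
  · rw [chainHeight, if_pos h, h, sign_neg (by omega)]; rfl
  · rw [chainHeight_of_vvecE_eq_zero h, h, sub_self, sign_zero]; rfl
  · rw [chainHeight, if_neg (by rw [h]; decide), if_neg (by rw [h]; decide), h,
      sign_pos (by omega)]
    rfl

/-- Points of `ℤ³` realising `A_{n,ℓ}`. The chain is ordered by the first coordinate; the apex
`2ℓ - 1` shares its first and last coordinates with the point `2ℓ - 2` when
`(v_{n,ℓ})_{2ℓ-2} = 0`, which keeps that zero entry exact after clustering. -/
def coord (n ℓ p : ℕ) : Fin 3 → ℤ :=
  if p < 2 * ℓ - 1 then ![-(p : ℤ), chainHeight n ℓ p, chainHeight n ℓ p]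
  else ![if vvecE n ℓ (2 * ℓ - 2) = 0 then 2 - 2 * (ℓ : ℤ) else 1 - 2 * ℓ, -(2 * ℓ + 1), 2 * ℓ + 1]

lemma coord_of_lt {n ℓ p : ℕ} (hp : p < 2 * ℓ - 1) :
    coord n ℓ p = ![-(p : ℤ), chainHeight n ℓ p, chainHeight n ℓ p] :=
  if_pos hp

lemma coord_apex (n ℓ : ℕ) : coord n ℓ (2 * ℓ - 1) =
    ![if vvecE n ℓ (2 * ℓ - 2) = 0 then 2 - 2 * (ℓ : ℤ) else 1 - 2 * ℓ, -(2 * ℓ + 1), 2 * ℓ + 1] :=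
  if_neg (lt_irrefl _)

lemma sign_prod_coord_sub_apex {n ℓ p : ℕ} (hp : p < 2 * ℓ - 1) :
    (SignType.sign (∏ i, (coord n ℓ p i - coord n ℓ (2 * ℓ - 1) i)) : ℤ) = vvecE n ℓ p := by
  have hh := one_le_chainHeight n ℓ p
  rw [Fin.prod_univ_three, coord_of_lt hp, coord_apex]
  simp only [cons_val_zero, cons_val_one, cons_val_two, head_cons, tail_cons]
  by_cases h : vvecE n ℓ p = 0
  · rw [chainHeight_of_vvecE_eq_zero h, h, sub_self, mul_zero, sign_zero]
    rfl
  · have hu : 0 < -(p : ℤ) - if vvecE n ℓ (2 * ℓ - 2) = 0 then 2 - 2 * (ℓ : ℤ) else 1 - 2 * ℓ := by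
      split_ifs with h'
      · have : p ≠ 2 * ℓ - 2 := by rintro rfl; exact h h'
        omega
      · omega
    rw [sign_mul, sign_mul, sign_pos hu, sign_pos (by omega), one_mul, one_mul,
      sign_chainHeight_sub hp]

lemma sign_prod_coord_sub_of_lt {n ℓ p q : ℕ} (hq : q < 2 * ℓ) (hpq : p < q) :
    (SignType.sign (∏ i, (coord n ℓ p i - coord n ℓ q i)) : ℤ) = AmatE n ℓ p q := by
  have hp : p < 2 * ℓ - 1 := by omega
  rcases Nat.lt_or_ge q (2 * ℓ - 1) with hq' | hq'
  · have hh := chainHeight_ne (n := n) hp hq' hpq.ne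
    have hprod : 0 < ∏ i, (coord n ℓ p i - coord n ℓ q i) := by
      rw [Fin.prod_univ_three, coord_of_lt hp, coord_of_lt hq']
      simp only [cons_val_zero, cons_val_one, cons_val_two, head_cons, tail_cons, mul_assoc]
      exact mul_pos (by omega) (mul_self_pos.2 (sub_ne_zero.2 hh))
    rw [sign_pos hprod, AmatE, if_pos hp, if_pos hq', SmatE, if_pos hpq]
    rfl
  · obtain rfl : q = 2 * ℓ - 1 := by omega
    rw [sign_prod_coord_sub_apex hp, AmatE, if_pos hp, if_neg (lt_irrefl _)]

lemma sign_prod_coord_sub {n ℓ p q : ℕ} (hp : p < 2 * ℓ) (hq : q < 2 * ℓ) :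
    (SignType.sign (∏ i, (coord n ℓ p i - coord n ℓ q i)) : ℤ) = AmatE n ℓ p q := by
  rcases lt_trichotomy p q with hpq | rfl | hpq
  · exact sign_prod_coord_sub_of_lt hq hpq
  · simp [AmatE_self]
  · rw [prod_sub_swap_fin_three, Left.sign_neg, SignType.coe_neg,
      sign_prod_coord_sub_of_lt hp hpq, AmatE_antisymm, neg_neg]

lemma coord_eq_of_AmatE_eq_zero {n ℓ p q : ℕ} (hp : p < 2 * ℓ) (hq : q < 2 * ℓ)
    (h : AmatE n ℓ p q = 0) : coord n ℓ p 0 = coord n ℓ q 0 ∧ coord n ℓ p 2 = coord n ℓ q 2 := by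
  wlog hpq : p ≤ q generalizing p q
  · have := this hq hp (by rw [AmatE_antisymm, h, neg_zero]) (by omega)
    exact ⟨this.1.symm, this.2.symm⟩
  rcases hpq.eq_or_lt with rfl | hpq
  · exact ⟨rfl, rfl⟩
  have hp' : p < 2 * ℓ - 1 := by omega
  obtain rfl : q = 2 * ℓ - 1 := by
    by_contra hq'
    rw [AmatE, if_pos hp', if_pos (by omega), SmatE, if_pos hpq] at h
    exact one_ne_zero h
  rw [AmatE, if_pos hp', if_neg (lt_irrefl _)] at h
  obtain rfl := eq_of_vvecE_eq_zero h
  rw [coord_of_lt hp', coord_apex, if_pos h, chainHeight_of_vvecE_eq_zero h]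
  exact ⟨by simp only [cons_val_zero]; omega, rfl⟩

end Amat

namespace Bmat

/-- Row `i` of `B_{ν,ℓ}` is written as `i = 2ℓ b + r`: position `r` in the diagonal block `b`.
Off their diagonal block, the rows of block `b ≥ 1` repeat the row `b - 1` of block `0`, their
anchor. -/
def anchor (b r : ℕ) : ℕ := if b = 0 then r else b - 1

lemma anchor_zero (r : ℕ) : anchor 0 r = r := rfl

lemma anchor_of_ne_zero {b : ℕ} (hb : b ≠ 0) (r : ℕ) : anchor b r = b - 1 := if_neg hb

def blockEntry (ℓ : ℕ) (ν : ℕ → ℕ) (b r b' r' : ℕ) : ℤ :=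
  if b = b' then AmatE (ν b) ℓ r r' else AmatE (ν 0) ℓ (anchor b r) (anchor b' r')

def blockEquiv (L k : ℕ) : Fin (L * k) ⊕ Fin L ≃ Fin (L * (k + 1)) :=
  finSumFinEquiv.trans (finCongr (by ring))

variable {ℓ : ℕ} {ν : ℕ → ℕ}

lemma blockEntry_of_ne {b b' : ℕ} (h : b ≠ b') (r r' : ℕ) :
    blockEntry ℓ ν b r b' r' = AmatE (ν 0) ℓ (anchor b r) (anchor b' r') :=
  if_neg h

lemma blockEntry_antisymm (b r b' r' : ℕ) :
    blockEntry ℓ ν b' r' b r = -blockEntry ℓ ν b r b' r' := by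
  rcases eq_or_ne b b' with rfl | h
  · rw [blockEntry, blockEntry, if_pos rfl, if_pos rfl, AmatE_antisymm]
  · rw [blockEntry_of_ne h, blockEntry_of_ne h.symm, AmatE_antisymm]

lemma blockEntry_zero_right (b r p : ℕ) :
    blockEntry ℓ ν b r 0 p = AmatE (ν 0) ℓ (anchor b r) p := by
  rcases eq_or_ne b 0 with rfl | hb
  · exact if_pos rfl
  · rw [blockEntry_of_ne hb, anchor_zero]

lemma succ_apply_blockEquiv (k : ℕ) (x y : Fin (2 * ℓ * k) ⊕ Fin (2 * ℓ)) :
    Bmat ℓ ν (k + 1) (blockEquiv (2 * ℓ) k x) (blockEquiv (2 * ℓ) k y) =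
      fromBlocks (Bmat ℓ ν k)
        (of fun i _ => if h : k - 1 < 2 * ℓ * k then Bmat ℓ ν k i ⟨k - 1, h⟩ else 0)
        (-(of fun i _ => if h : k - 1 < 2 * ℓ * k then Bmat ℓ ν k i ⟨k - 1, h⟩ else 0)ᵀ)
        (Amat (ν k) ℓ) x y := by
  rw [Bmat]
  exact congr_arg₂ _ ((blockEquiv _ k).symm_apply_apply x) ((blockEquiv _ k).symm_apply_apply y)

lemma apply_eq_blockEntry {k : ℕ} (hk : k ≤ 2 * ℓ) (i j : Fin (2 * ℓ * k)) :
    Bmat ℓ ν k i j = blockEntry ℓ ν (i / (2 * ℓ)) (i % (2 * ℓ)) (j / (2 * ℓ)) (j % (2 * ℓ)) := by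
  induction k with
  | zero => exact i.elim0
  | succ k ih =>
    have hL : 0 < 2 * ℓ := by omega
    have hk₁ : k - 1 < 2 * ℓ := by omega
    have hnew (r : Fin (2 * ℓ)) : (2 * ℓ * k + r) / (2 * ℓ) = k ∧ (2 * ℓ * k + r) % (2 * ℓ) = r :=
      ⟨by rw [Nat.mul_add_div hL, Nat.div_eq_of_lt r.isLt, add_zero],
        by rw [Nat.mul_add_mod, Nat.mod_eq_of_lt r.isLt]⟩
    have hold (i : Fin (2 * ℓ * k)) : k ≠ 0 ∧ k - 1 < 2 * ℓ * k ∧ i / (2 * ℓ) ≠ k := by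
      have := i.isLt
      have := Nat.le_mul_of_pos_left k hL
      exact ⟨by rintro rfl; exact i.elim0, by omega, (Nat.div_lt_of_lt_mul i.isLt).ne⟩
    obtain ⟨x, rfl⟩ := (blockEquiv (2 * ℓ) k).surjective i
    obtain ⟨y, rfl⟩ := (blockEquiv (2 * ℓ) k).surjective j
    rw [succ_apply_blockEquiv]
    rcases x with i | r <;> rcases y with j | r' <;>
      simp only [fromBlocks_apply₁₁, fromBlocks_apply₁₂, fromBlocks_apply₂₁, fromBlocks_apply₂₂,
        blockEquiv, Equiv.trans_apply, finSumFinEquiv_apply_left, finSumFinEquiv_apply_right,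
        finCongr_apply, Fin.val_cast, Fin.val_castAdd, Fin.val_natAdd, Matrix.neg_apply,
        transpose_apply, of_apply]
    · exact ih (by omega) i j
    · rw [dif_pos (hold i).2.1, ih (by omega), (hnew r').1, (hnew r').2, Nat.div_eq_of_lt hk₁,
        Nat.mod_eq_of_lt hk₁, blockEntry_zero_right, blockEntry_of_ne (hold i).2.2,
        anchor_of_ne_zero (hold i).1]
    · rw [dif_pos (hold j).2.1, ih (by omega), (hnew r).1, (hnew r).2, Nat.div_eq_of_lt hk₁,
        Nat.mod_eq_of_lt hk₁, blockEntry_zero_right, blockEntry_antisymm,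
        blockEntry_of_ne (hold j).2.2, anchor_of_ne_zero (hold j).1]
    · rw [(hnew r).1, (hnew r).2, (hnew r').1, (hnew r').2]
      exact (if_pos rfl).symm

/-- The last row is `ε * c 2` times the first one, so the offset stays singular after subtracting
it from a diagonal matrix whose first and last entries vanish. -/
def clusterOffset (ε : ℝ) (c : Fin 3 → ℤ) : Matrix (Fin 3) (Fin 3) ℝ :=
  !![ε * c 0, 0, 1; 0, ε * c 1, 1; ε ^ 2 * (c 0 * c 2), 0, ε * c 2]

def clusterPoint (ℓ : ℕ) (ν : ℕ → ℕ) (ε : ℝ) (b r : ℕ) : Matrix (Fin 3) (Fin 3) ℝ :=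
  diagonal (fun i => (Amat.coord (ν 0) ℓ (anchor b r) i : ℝ)) +
    if b = 0 then 0 else clusterOffset ε (Amat.coord (ν b) ℓ r)

lemma det_clusterOffset_sub (ε : ℝ) (c c' : Fin 3 → ℤ) :
    (clusterOffset ε c - clusterOffset ε c').det = ε ^ 3 * ((∏ i, (c i - c' i) : ℤ) : ℝ) := by
  simp only [clusterOffset, det_fin_three, Matrix.sub_apply, of_apply, cons_val', cons_val_zero,
    cons_val_one, cons_val, cons_val_fin_one, Fin.prod_univ_three, Int.cast_mul, Int.cast_sub]
  ring

lemma det_diagonal_sub_clusterOffset (ε : ℝ) (c : Fin 3 → ℤ) {d : Fin 3 → ℝ} (h₀ : d 0 = 0)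
    (h₂ : d 2 = 0) : (diagonal d - clusterOffset ε c).det = 0 := by
  simp only [clusterOffset, det_fin_three, Matrix.sub_apply, of_apply, cons_val', cons_val_zero,
    cons_val_one, cons_val, cons_val_fin_one, diagonal_apply, Fin.reduceEq, ↓reduceIte, h₀, h₂]
  ring

lemma det_clusterPoint_zero_sub (ℓ : ℕ) (ν : ℕ → ℕ) (b r b' r' : ℕ) :
    (clusterPoint ℓ ν 0 b r - clusterPoint ℓ ν 0 b' r').det =
      ((∏ i, (Amat.coord (ν 0) ℓ (anchor b r) i - Amat.coord (ν 0) ℓ (anchor b' r') i) : ℤ) :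
        ℝ) := by
  unfold clusterPoint
  split_ifs <;> simp [clusterOffset, det_fin_three, Fin.prod_univ_three]

lemma continuous_clusterPoint (ℓ : ℕ) (ν : ℕ → ℕ) (b r : ℕ) :
    Continuous fun ε => clusterPoint ℓ ν ε b r := by
  unfold clusterPoint clusterOffset
  split_ifs <;> fun_prop

lemma sign_det_clusterPoint_sub_of_pos {ε : ℝ} (hε : 0 < ε) (b r r' : ℕ) :
    SignType.sign (clusterPoint ℓ ν ε b r - clusterPoint ℓ ν ε b r').det =
      SignType.sign (∏ i, (Amat.coord (ν b) ℓ r i - Amat.coord (ν b) ℓ r' i)) := by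
  unfold clusterPoint
  split_ifs with hb
  · subst hb
    rw [add_zero, add_zero, anchor_zero, anchor_zero, diagonal_sub, det_diagonal,
      ← sign_intCast (α := ℝ)]
    push_cast
    rfl
  · rw [anchor_of_ne_zero hb, anchor_of_ne_zero hb, add_sub_add_left_eq_sub,
      det_clusterOffset_sub, sign_mul, sign_pos (pow_pos hε 3), one_mul, sign_intCast]

lemma det_clusterPoint_sub_eq_zero (ε : ℝ) {r b' : ℕ} (hb' : b' ≠ 0)
    (h₀ : Amat.coord (ν 0) ℓ r 0 = Amat.coord (ν 0) ℓ (b' - 1) 0)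
    (h₂ : Amat.coord (ν 0) ℓ r 2 = Amat.coord (ν 0) ℓ (b' - 1) 2) (r' : ℕ) :
    (clusterPoint ℓ ν ε 0 r - clusterPoint ℓ ν ε b' r').det = 0 := by
  rw [clusterPoint, clusterPoint, if_pos rfl, if_neg hb', add_zero, sub_add_eq_sub_sub,
    diagonal_sub, anchor_zero, anchor_of_ne_zero hb']
  exact det_diagonal_sub_clusterOffset ε _ (sub_eq_zero.2 (congrArg _ h₀))
    (sub_eq_zero.2 (congrArg _ h₂))

lemma anchor_lt {k b r : ℕ} (hk : k ≤ 2 * ℓ) (hb : b < k) (hr : r < 2 * ℓ) :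
    anchor b r < 2 * ℓ := by
  unfold anchor; split_ifs <;> omega

lemma det_clusterPoint_sub_eq_zero_of_AmatE_eq_zero (ε : ℝ) {k b b' r r' : ℕ} (hk : k ≤ 2 * ℓ)
    (hb : b < k) (hb' : b' < k) (hr : r < 2 * ℓ) (hr' : r' < 2 * ℓ) (hbb : b ≠ b')
    (hA : AmatE (ν 0) ℓ (anchor b r) (anchor b' r') = 0) :
    (clusterPoint ℓ ν ε b r - clusterPoint ℓ ν ε b' r').det = 0 := by
  have hcoord := Amat.coord_eq_of_AmatE_eq_zero (anchor_lt hk hb hr) (anchor_lt hk hb' hr') hA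
  rcases eq_or_ne b 0 with rfl | hb₀
  · rw [anchor_zero, anchor_of_ne_zero hbb.symm] at hcoord
    exact det_clusterPoint_sub_eq_zero ε hbb.symm hcoord.1 hcoord.2 r'
  rcases eq_or_ne b' 0 with rfl | hb'₀
  · rw [anchor_zero, anchor_of_ne_zero hb₀] at hcoord
    rw [← neg_sub, det_neg, det_clusterPoint_sub_eq_zero ε hb₀ hcoord.1.symm hcoord.2.symm,
      mul_zero]
  · rw [anchor_of_ne_zero hb₀, anchor_of_ne_zero hb'₀] at hA
    exact absurd hA (AmatE_ne_zero (by omega) (by omega) (by omega))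

lemma eventually_sign_det_clusterPoint_sub_of_AmatE_ne_zero {k b b' r r' : ℕ} (hk : k ≤ 2 * ℓ)
    (hb : b < k) (hb' : b' < k) (hr : r < 2 * ℓ) (hr' : r' < 2 * ℓ)
    (hA : AmatE (ν 0) ℓ (anchor b r) (anchor b' r') ≠ 0) :
    ∀ᶠ ε in 𝓝 (0 : ℝ),
      (SignType.sign (clusterPoint ℓ ν ε b r - clusterPoint ℓ ν ε b' r').det : ℤ) =
        AmatE (ν 0) ℓ (anchor b r) (anchor b' r') := by
  have hcont : Continuous fun ε => (clusterPoint ℓ ν ε b r - clusterPoint ℓ ν ε b' r').det :=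
    ((continuous_clusterPoint ℓ ν b r).sub (continuous_clusterPoint ℓ ν b' r')).matrix_det
  have hlimit := Amat.sign_prod_coord_sub (n := ν 0) (anchor_lt hk hb hr) (anchor_lt hk hb' hr')
  rw [← sign_intCast (α := ℝ), ← det_clusterPoint_zero_sub] at hlimit
  have hne : (clusterPoint ℓ ν 0 b r - clusterPoint ℓ ν 0 b' r').det ≠ 0 := by
    intro h
    rw [h, sign_zero] at hlimit
    exact hA hlimit.symm
  filter_upwards [eventually_sign_eq_of_continuousAt hcont.continuousAt hne] with ε hε
  rw [hε, hlimit]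

lemma eventually_sign_det_clusterPoint_sub {k b b' r r' : ℕ} (hk : k ≤ 2 * ℓ)
    (hb : b < k) (hb' : b' < k) (hr : r < 2 * ℓ) (hr' : r' < 2 * ℓ) :
    ∀ᶠ ε in 𝓝[>] (0 : ℝ),
      (SignType.sign (clusterPoint ℓ ν ε b r - clusterPoint ℓ ν ε b' r').det : ℤ) =
        blockEntry ℓ ν b r b' r' := by
  by_cases hbb : b = b'
  · subst hbb
    filter_upwards [self_mem_nhdsWithin] with ε hε
    rw [sign_det_clusterPoint_sub_of_pos hε, Amat.sign_prod_coord_sub hr hr', blockEntry,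
      if_pos rfl]
  rw [blockEntry_of_ne hbb]
  by_cases hA : AmatE (ν 0) ℓ (anchor b r) (anchor b' r') = 0
  · refine Eventually.of_forall fun ε => ?_
    rw [hA, det_clusterPoint_sub_eq_zero_of_AmatE_eq_zero ε hk hb hb' hr hr' hbb hA, sign_zero]
    rfl
  · exact nhdsWithin_le_nhds
      (eventually_sign_det_clusterPoint_sub_of_AmatE_ne_zero hk hb hb' hr hr' hA)

lemma exists_clusterPoint_signs_eq {k : ℕ} (hk : k ≤ 2 * ℓ) :
    ∃ ε : ℝ, ∀ i j : Fin (2 * ℓ * k),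
      (SignType.sign (clusterPoint ℓ ν ε (i / (2 * ℓ)) (i % (2 * ℓ)) -
        clusterPoint ℓ ν ε (j / (2 * ℓ)) (j % (2 * ℓ))).det : ℤ) = Bmat ℓ ν k i j := by
  have hblock (i : Fin (2 * ℓ * k)) : (i : ℕ) / (2 * ℓ) < k ∧ (i : ℕ) % (2 * ℓ) < 2 * ℓ := by
    have := i.pos
    exact ⟨Nat.div_lt_of_lt_mul i.isLt,
      Nat.mod_lt _ (Nat.pos_of_ne_zero fun h => by simp [h] at this)⟩
  obtain ⟨ε, hε⟩ := (eventually_all.2 fun i => eventually_all.2 fun j =>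
    eventually_sign_det_clusterPoint_sub (ν := ν) hk (hblock i).1 (hblock j).1 (hblock i).2
      (hblock j).2).exists
  exact ⟨ε, fun i j => (hε i j).trans (apply_eq_blockEntry hk i j).symm⟩

end Bmat

theorem Bmat_realised_by_determinant_signs (k ℓ m : ℕ) (ν : ℕ → ℕ)
    (hm : 1 ≤ m) (hkℓ : k ≤ 2 * ℓ) :
    ∃ P : Fin (2 * ℓ * k) → Matrix (Fin (2 * m + 1)) (Fin (2 * m + 1)) ℝ,
      ∀ i j : Fin (2 * ℓ * k), i ≠ j →
        ((SignType.sign ((P i - P j).det) : ℤ) = Bmat ℓ ν k i j) := by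
  obtain ⟨ε, hε⟩ := Bmat.exists_clusterPoint_signs_eq (ν := ν) hkℓ
  let e : Fin 3 ⊕ Fin (2 * (m - 1)) ≃ Fin (2 * m + 1) := finSumFinEquiv.trans (finCongr (by omega))
  refine ⟨fun i => reindexLinearEquiv ℝ ℝ e e (fromBlocks
    (Bmat.clusterPoint ℓ ν ε (i / (2 * ℓ)) (i % (2 * ℓ))) 0 0 ((i : ℝ) • 1)), fun i j hij => ?_⟩
  rw [← hε i j, ← map_sub, det_reindexLinearEquiv_self,
    sign_det_fromBlocks_smul_one_sub (by simp) _ _ (by exact_mod_cast Fin.val_ne_of_ne hij)]
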